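/- Let 1 < p < ∞, let 𝒬 be a countable collection of dyadic cubes in ℝ^n, let τ = {τ_Q : Q ∈ 𝒬} be nonnegative constants, and let w, σ be weights. Define T_τ(f) := ∑_{Q∈𝒬} τ_Q ⟨f⟩_Q 1_Q. Then ‖T_τ(·σ)‖_{L^p(σ)→L^{p,∞}(w)} ≃ sup_{R∈𝒬} w(R)^{−1/p'} ‖∑_{Q∈𝒬, Q⊆R} τ_Q ⟨w⟩_Q 1_Q‖_{L^{p'}(σ)}, with implied constants depending only on n and p, where p' is the conjugate exponent of p. -/

import Mathlib

open MeasureTheory ENNReal NNReal Set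

noncomputable section

namespace Paper

abbrev Rn (n : ℕ) := Fin n → ℝ

/-- A dyadic cube in `ℝⁿ`: `∏ᵢ [2^{-k} mᵢ, 2^{-k}(mᵢ+1))`. -/
def IsDyadicCube (n : ℕ) (Q : Set (Rn n)) : Prop :=
  ∃ (k : ℤ) (m : Fin n → ℤ), Q =
    {x : Rn n | ∀ i, (2:ℝ) ^ (-k) * m i ≤ x i ∧ x i < (2:ℝ) ^ (-k) * (m i + 1)}

/-- A sparse collection of dyadic cubes. -/
def IsSparse (n : ℕ) (S : Set (Set (Rn n))) : Prop :=
  (∀ Q ∈ S, IsDyadicCube n Q) ∧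
  ∃ E : Set (Rn n) → Set (Rn n),
    (∀ Q ∈ S, E Q ⊆ Q ∧ MeasurableSet (E Q) ∧ volume Q ≤ 2 * volume (E Q)) ∧
    S.Pairwise (fun Q Q' => Disjoint (E Q) (E Q'))

/-- Average `⟨w⟩_Q = |Q|⁻¹ ∫_Q w`. -/
def dAvg {n : ℕ} (w : Rn n → ℝ≥0∞) (Q : Set (Rn n)) : ℝ≥0∞ :=
  (volume Q)⁻¹ * ∫⁻ x in Q, w x

/-- Weighted average `⟨f⟩_Q^σ = σ(Q)⁻¹ ∫_Q f σ`. -/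
def dAvgW {n : ℕ} (σ f : Rn n → ℝ≥0∞) (Q : Set (Rn n)) : ℝ≥0∞ :=
  (∫⁻ x in Q, σ x)⁻¹ * ∫⁻ x in Q, f x * σ x

/-- Local integrability (w.r.t. dyadic cubes). -/
def LocInt {n : ℕ} (w : Rn n → ℝ≥0∞) : Prop :=
  ∀ Q : Set (Rn n), IsDyadicCube n Q → (∫⁻ x in Q, w x) < ∞

/-- The sparse operator `A_𝒮^r g = (∑_{Q∈𝒮} ⟨g⟩_Q^r 1_Q)^{1/r}`. -/
def sparseOp {n : ℕ} (S : Set (Set (Rn n))) (r : ℝ) (g : Rn n → ℝ≥0∞) (x : Rn n) : ℝ≥0∞ :=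
  (∑' Q : S, (Q : Set (Rn n)).indicator (fun _ => (dAvg g Q) ^ r) x) ^ (1 / r)

/-- `‖g‖_{L^p(w)} = (∫ g^p w)^{1/p}`. -/
def lpNorm {n : ℕ} (p : ℝ) (w g : Rn n → ℝ≥0∞) : ℝ≥0∞ :=
  (∫⁻ x, (g x) ^ p * w x) ^ (1 / p)

/-- `‖g‖_{L^{p,∞}(w)} = sup_{t>0} t · w({g > t})^{1/p}`. -/
def wLpNorm {n : ℕ} (p : ℝ) (w g : Rn n → ℝ≥0∞) : ℝ≥0∞ :=
  ⨆ (t : ℝ≥0) (_ : 0 < t), (t : ℝ≥0∞) * (∫⁻ x in {x | (t : ℝ≥0∞) < g x}, w x) ^ (1 / p)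

/-- `‖A_𝒮^r(·σ)‖_{L^p(σ)→L^p(w)}`, the least constant in the strong-type bound. -/
def opNormStrong {n : ℕ} (S : Set (Set (Rn n))) (r p : ℝ) (w σ : Rn n → ℝ≥0∞) : ℝ≥0∞ :=
  sInf {C : ℝ≥0∞ | ∀ f : Rn n → ℝ≥0∞, Measurable f →
    lpNorm p w (sparseOp S r (fun x => f x * σ x)) ≤ C * lpNorm p σ f}

/-- `‖A_𝒮^r(·σ)‖_{L^p(σ)→L^{p,∞}(w)}`, the least constant in the weak-type bound. -/
def opNormWeak {n : ℕ} (S : Set (Set (Rn n))) (r p : ℝ) (w σ : Rn n → ℝ≥0∞) : ℝ≥0∞ :=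
  sInf {C : ℝ≥0∞ | ∀ f : Rn n → ℝ≥0∞, Measurable f →
    wLpNorm p w (sparseOp S r (fun x => f x * σ x)) ≤ C * lpNorm p σ f}

/-- Two-weight (dyadic) `A_p` characteristic. -/
def ApChar {n : ℕ} (p : ℝ) (w σ : Rn n → ℝ≥0∞) : ℝ≥0∞ :=
  ⨆ (Q : Set (Rn n)) (_ : IsDyadicCube n Q), dAvg w Q * (dAvg σ Q) ^ (p - 1)

/-- Dyadic maximal operator. -/
def dyadicM {n : ℕ} (g : Rn n → ℝ≥0∞) (x : Rn n) : ℝ≥0∞ :=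
  ⨆ (Q : Set (Rn n)) (_ : IsDyadicCube n Q ∧ x ∈ Q), dAvg g Q

/-- Fujii–Wilson (dyadic) `A_∞` characteristic. -/
def AinfChar {n : ℕ} (w : Rn n → ℝ≥0∞) : ℝ≥0∞ :=
  ⨆ (Q : Set (Rn n)) (_ : IsDyadicCube n Q),
    (∫⁻ x in Q, w x)⁻¹ * ∫⁻ x in Q, dyadicM (Q.indicator w) x

/-- The testing constant `𝒯_s` (Theorem 1.4 uses `s = r`). -/
def testT {n : ℕ} (S : Set (Set (Rn n))) (p s : ℝ) (w σ : Rn n → ℝ≥0∞) : ℝ≥0∞ :=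
  ⨆ (R : Set (Rn n)) (_ : R ∈ S),
    (∫⁻ x in R, σ x) ^ (-(s / p)) *
      lpNorm (p / s) w (fun x => ∑' Q : {Q : Set (Rn n) // Q ∈ S ∧ Q ⊆ R},
        (Q : Set (Rn n)).indicator (fun _ => (dAvg σ Q) ^ s) x)

/-- The dual testing constant `𝒯*`. -/
def testTstar {n : ℕ} (S : Set (Set (Rn n))) (p r : ℝ) (w σ : Rn n → ℝ≥0∞) : ℝ≥0∞ :=
  ⨆ (R : Set (Rn n)) (_ : R ∈ S),
    (∫⁻ x in R, w x) ^ (-(1 - r / p)) *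
      lpNorm ((p / r) / (p / r - 1)) σ (fun x => ∑' Q : {Q : Set (Rn n) // Q ∈ S ∧ Q ⊆ R},
        (Q : Set (Rn n)).indicator (fun _ => (dAvg σ Q) ^ (r - 1) * dAvg w Q) x)


/-- The linear operator `T_τ f = ∑_{Q∈𝒬} τ_Q ⟨f⟩_Q 1_Q`. -/
def linOp {n : ℕ} (Qc : Set (Set (Rn n))) (τ : Set (Rn n) → ℝ≥0)
    (g : Rn n → ℝ≥0∞) (x : Rn n) : ℝ≥0∞ :=
  ∑' Q : Qc, (Q : Set (Rn n)).indicator (fun _ => (τ Q : ℝ≥0∞) * dAvg g Q) x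

/-- Weak-type operator norm of `T_τ(·σ) : L^p(σ) → L^{p,∞}(w)`. -/
def linOpNormWeak {n : ℕ} (Qc : Set (Set (Rn n))) (τ : Set (Rn n) → ℝ≥0) (p : ℝ)
    (w σ : Rn n → ℝ≥0∞) : ℝ≥0∞ :=
  sInf {C : ℝ≥0∞ | ∀ f : Rn n → ℝ≥0∞, Measurable f →
    wLpNorm p w (linOp Qc τ (fun x => f x * σ x)) ≤ C * lpNorm p σ f}

/-- Strong-type operator norm of `T_τ(·σ) : L^p(σ) → L^p(w)`. -/
def linOpNormStrong {n : ℕ} (Qc : Set (Set (Rn n))) (τ : Set (Rn n) → ℝ≥0) (p : ℝ)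
    (w σ : Rn n → ℝ≥0∞) : ℝ≥0∞ :=
  sInf {C : ℝ≥0∞ | ∀ f : Rn n → ℝ≥0∞, Measurable f →
    lpNorm p w (linOp Qc τ (fun x => f x * σ x)) ≤ C * lpNorm p σ f}

/-- Dual testing constant `sup_R w(R)^{-1/p′} ‖∑_{Q⊆R} τ_Q ⟨w⟩_Q 1_Q‖_{L^{p′}(σ)}`. -/
def linTestDual {n : ℕ} (Qc : Set (Set (Rn n))) (τ : Set (Rn n) → ℝ≥0) (p : ℝ)
    (w σ : Rn n → ℝ≥0∞) : ℝ≥0∞ :=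
  ⨆ (R : Set (Rn n)) (_ : R ∈ Qc),
    (∫⁻ x in R, w x) ^ (-(1 - 1 / p)) *
      lpNorm (p / (p - 1)) σ (fun x => ∑' Q : {Q : Set (Rn n) // Q ∈ Qc ∧ Q ⊆ R},
        (Q : Set (Rn n)).indicator (fun _ => (τ Q : ℝ≥0∞) * dAvg w Q) x)

/-- Direct testing constant `sup_R σ(R)^{-1/p} ‖∑_{Q⊆R} τ_Q ⟨σ⟩_Q 1_Q‖_{L^p(w)}`. -/
def linTestDirect {n : ℕ} (Qc : Set (Set (Rn n))) (τ : Set (Rn n) → ℝ≥0) (p : ℝ)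
    (w σ : Rn n → ℝ≥0∞) : ℝ≥0∞ :=
  ⨆ (R : Set (Rn n)) (_ : R ∈ Qc),
    (∫⁻ x in R, σ x) ^ (-(1 / p)) *
      lpNorm p w (fun x => ∑' Q : {Q : Set (Rn n) // Q ∈ Qc ∧ Q ⊆ R},
        (Q : Set (Rn n)).indicator (fun _ => (τ Q : ℝ≥0∞) * dAvg σ Q) x)

/-!
Write `μ = w dx`, `ν = σ dx` and `q = p / (p - 1)`. Since `T_τ` is symmetric,
`∫_E T_τ(fσ) dμ = ∫ f · T_τ(1_E w) dν`, and the weak `L^p(μ)` norm of `g` is comparable to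
`sup_E μ(E)^{-1/q} ∫_E g dμ`: Kolmogorov's inequality gives one direction, restricting to
`{g > t}` the other.

Upper bound: by Hölder it suffices that `‖T_τ(1_E w)‖_{L^q(ν)} ≲ 𝒯* μ(E)^{1/q}`, where `𝒯*` is
the testing constant `linTestDual`. Sort the cubes by the dyadic size `2^{-j}` of
`μ(E ∩ Q) / μ(Q)`. On level `j`, `⟨1_E w⟩_Q ≤ 2^{-j} ⟨w⟩_Q`; the maximal cubes `R` of the level
are disjoint with `∑ μ(R) ≤ 2^{j+1} μ(E)`, so the testing condition on each `R` bounds the level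
by `2^{-j} 𝒯* (2^{j+1} μ(E))^{1/q}`, and the levels sum geometrically.

Lower bound: for a cube `R` and a finite part `G` of `∑_{Q ⊆ R} τ_Q ⟨w⟩_Q 1_Q`, test the weak
type bound on `f = G^{q-1}`:
`‖G‖_q^q ≤ ∫_R T_τ(fσ) dμ ≲ ‖f‖_{L^p(ν)} μ(R)^{1/q} = ‖G‖_q^{q/p} μ(R)^{1/q}`.
-/

lemma iSup_rpow {ι : Sort*} (f : ι → ℝ≥0∞) {q : ℝ} (hq : 0 < q) :
    (⨆ i, f i) ^ q = ⨆ i, f i ^ q :=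
  (ENNReal.orderIsoRpow q hq).map_iSup f

lemma mul_rpow_le_of_mul_le_mul_rpow {a x y : ℝ≥0∞} {r s : ℝ} (hr : 0 < r) (hrs : r + s = 1)
    (ha : a ≠ ∞) (h : x * a ≤ y * a ^ s) : x * a ^ r ≤ y := by
  rcases eq_or_ne a 0 with rfl | ha0
  · simp [ENNReal.zero_rpow_of_pos hr]
  rw [← ENNReal.mul_le_mul_iff_left (c := a ^ s) (by simp [ha0, ha]) (by simp [ha0, ha]), mul_assoc,
    ← ENNReal.rpow_add _ _ ha0 ha, hrs, ENNReal.rpow_one]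
  exact h

lemma rpow_neg_mul_mul_rpow_le {a b : ℝ≥0∞} {r : ℝ} (ha : a ≠ ∞) (hr : 0 < r) :
    a ^ (-r) * (b * a ^ r) ≤ b := by
  rcases eq_or_ne a 0 with rfl | ha0
  · simp [ENNReal.zero_rpow_of_pos hr]
  rw [mul_left_comm, ← ENNReal.rpow_add _ _ ha0 ha, neg_add_cancel, ENNReal.rpow_zero, mul_one]

lemma two_zpow_ne_zero (k : ℤ) : (2 : ℝ≥0∞) ^ k ≠ 0 :=
  (ENNReal.zpow_pos two_ne_zero ofNat_ne_top k).ne'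

lemma two_zpow_ne_top (k : ℤ) : (2 : ℝ≥0∞) ^ k ≠ ∞ :=
  (ENNReal.zpow_lt_top two_ne_zero ofNat_ne_top k).ne

lemma tsum_two_zpow_sub (k : ℤ) : ∑' n : ℕ, (2 : ℝ≥0∞) ^ (k - n) = 2 ^ (k + 1) := by
  have h2 : ∀ n : ℕ, (2 : ℝ≥0∞) ^ (k - n) = 2 ^ k * 2⁻¹ ^ n := fun n => by
    rw [sub_eq_add_neg, ENNReal.zpow_add two_ne_zero ofNat_ne_top, ENNReal.zpow_neg,
      zpow_natCast, ENNReal.inv_pow]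
  rw [tsum_congr h2, ENNReal.tsum_mul_left, ENNReal.tsum_geometric, ENNReal.one_sub_inv_two,
    inv_inv, ENNReal.zpow_add two_ne_zero ofNat_ne_top, zpow_one]

lemma le_tsum_two_zpow_ite (y : ℝ≥0∞) :
    y ≤ ∑' k : ℤ, if (2 : ℝ≥0∞) ^ k < y then 2 ^ k else 0 := by
  have hS : ∀ k : ℤ, 2 ^ k < y →
      (2 : ℝ≥0∞) ^ (k + 1) ≤ ∑' k : ℤ, if (2 : ℝ≥0∞) ^ k < y then 2 ^ k else 0 := fun k hk => by
    rw [← tsum_two_zpow_sub]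
    refine le_trans (le_of_eq (tsum_congr fun n => ?_))
      (ENNReal.tsum_comp_le_tsum_of_injective (f := fun n : ℕ => k - n) (fun a b h => ?_) _)
    · rw [if_pos ((ENNReal.zpow_le_of_le one_le_two (by omega)).trans_lt hk)]
    · simpa using h
  refine le_of_forall_lt_imp_le_of_dense fun z hz => ?_
  rcases eq_or_ne z 0 with rfl | hz0
  · exact zero_le
  obtain ⟨k, hk1, hk2⟩ := ENNReal.exists_mem_Ico_zpow hz0 hz.ne_top one_lt_two ofNat_ne_top
  exact hk2.le.trans (hS k (hk1.trans_lt hz))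

/-- The constant of Kolmogorov's inequality: after rescaling, the dyadic layer `{g > 2^k}`
contributes at most `2^k min(1, 2^{-kp})`. -/
def layerConst (p : ℝ) : ℝ≥0∞ := ∑' k : ℤ, 2 ^ k * min 1 ((2 ^ k) ^ p)⁻¹

lemma one_le_layerConst (p : ℝ) : 1 ≤ layerConst p :=
  le_of_eq_of_le (by simp) (ENNReal.le_tsum (0 : ℤ))

lemma layerConst_ne_top {p : ℝ} (hp : 1 < p) : layerConst p ≠ ∞ := by
  have hr : 2 * ((2 : ℝ≥0∞) ^ p)⁻¹ < 1 := by
    rw [← div_eq_mul_inv, ENNReal.div_lt_iff (Or.inl (by positivity)) (Or.inl (by simp))]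
    simpa using ENNReal.rpow_lt_rpow_of_exponent_lt one_lt_two ofNat_ne_top hp
  rw [layerConst, tsum_of_nat_of_neg_add_one ENNReal.summable ENNReal.summable]
  refine ENNReal.add_ne_top.2 ⟨ne_top_of_le_ne_top (tsum_geometric_lt_top.2 hr).ne
    (ENNReal.tsum_le_tsum fun n => ?_),
    ne_top_of_le_ne_top (b := ∑' n : ℕ, (2 : ℝ≥0∞) ^ (-1 - (n : ℤ))) ?_
      (ENNReal.tsum_le_tsum fun n => ?_)⟩
  · have h2 : ((2 : ℝ≥0∞) ^ n) ^ p = (2 ^ p) ^ n := by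
      rw [← ENNReal.rpow_natCast, ← ENNReal.rpow_mul, mul_comm, ENNReal.rpow_mul,
        ENNReal.rpow_natCast]
    rw [zpow_natCast, mul_pow, ← ENNReal.inv_pow, ← h2]
    exact mul_le_mul_right (min_le_right _ _) _
  · simp [tsum_two_zpow_sub]
  · rw [show -(n + 1 : ℤ) = -1 - n by ring]
    exact mul_le_of_le_one_right' (min_le_left _ _)

lemma exists_two_pow_mul_le_lt {a b : ℝ≥0∞} (ha : a ≠ 0) (hab : a ≤ b) (hb : b ≠ ∞) :
    ∃ j : ℕ, 2 ^ j * a ≤ b ∧ b < 2 ^ (j + 1) * a := by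
  classical
  have hex : ∃ j : ℕ, b < 2 ^ (j + 1) * a := by
    obtain ⟨j, hj⟩ := ENNReal.exists_nat_gt (ENNReal.div_ne_top hb ha)
    refine ⟨j, (ENNReal.div_lt_iff (Or.inl ha) (Or.inr hb)).1 (hj.trans_le ?_)⟩
    exact_mod_cast (Nat.lt_two_pow_self.trans (Nat.pow_lt_pow_right one_lt_two j.lt_succ_self)).le
  refine ⟨Nat.find hex, ?_, Nat.find_spec hex⟩
  rcases h : Nat.find hex with _ | j
  · simpa using hab
  · exact not_lt.1 (Nat.find_min hex (h ▸ j.lt_succ_self))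

lemma inv_two_pow_mul_two_pow_succ_rpow {p q : ℝ} (hpq : p.HolderConjugate q) (j : ℕ) :
    ((2 : ℝ≥0∞) ^ j)⁻¹ * (2 ^ (j + 1)) ^ (1 / q) = 2 ^ (1 / q) * (2⁻¹ ^ (1 / p)) ^ j := by
  rw [← ENNReal.rpow_natCast, ← ENNReal.rpow_neg, ← ENNReal.rpow_natCast, ← ENNReal.rpow_mul,
    ENNReal.inv_rpow, ← ENNReal.rpow_neg, ← ENNReal.rpow_natCast, ← ENNReal.rpow_mul,
    ← ENNReal.rpow_add _ _ two_ne_zero ofNat_ne_top,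
    ← ENNReal.rpow_add _ _ two_ne_zero ofNat_ne_top]
  congr 1
  push_cast
  linear_combination (j : ℝ) * hpq.one_div_add_one_div

section Lebesgue

variable {α : Type*} [MeasurableSpace α] {μ : Measure α}

lemma lintegral_rpow_tsum_le_of_forall_finset {ι : Type*} [Countable ι] {F : ι → α → ℝ≥0∞}
    (hF : ∀ i, Measurable (F i)) {q : ℝ} (hq : 0 < q) {M : ℝ≥0∞}
    (h : ∀ s : Finset ι, (∫⁻ x, (∑ i ∈ s, F i x) ^ q ∂μ) ^ (1 / q) ≤ M) :
    (∫⁻ x, (∑' i, F i x) ^ q ∂μ) ^ (1 / q) ≤ M := by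
  have hmono : Monotone fun (s : Finset ι) x => (∑ i ∈ s, F i x) ^ q := fun s t hst x =>
    ENNReal.rpow_le_rpow (Finset.sum_le_sum_of_subset hst) hq.le
  simp_rw [ENNReal.tsum_eq_iSup_sum, iSup_rpow _ hq]
  rw [lintegral_iSup_directed_of_measurable
    (fun s => (Finset.measurable_sum s fun i _ => hF i).pow_const q) hmono.directed_le,
    iSup_rpow _ (one_div_pos.2 hq)]
  exact iSup_le h

lemma lintegral_rpow_finset_sum_le {ι : Type*} {q : ℝ} (hq : 1 ≤ q) (s : Finset ι)
    {F : ι → α → ℝ≥0∞} (hF : ∀ i ∈ s, Measurable (F i)) :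
    (∫⁻ x, (∑ i ∈ s, F i x) ^ q ∂μ) ^ (1 / q) ≤ ∑ i ∈ s, (∫⁻ x, F i x ^ q ∂μ) ^ (1 / q) := by
  have hq0 : 0 < q := zero_lt_one.trans_le hq
  have heLp : ∀ G : α → ℝ≥0∞, eLpNorm G (ENNReal.ofReal q) μ = (∫⁻ x, G x ^ q ∂μ) ^ (1 / q) :=
    fun G => by
      simp [eLpNorm_eq_lintegral_rpow_enorm_toReal (ENNReal.ofReal_pos.2 hq0).ne',
        ENNReal.toReal_ofReal hq0.le]
  simpa only [heLp, Finset.sum_apply] using eLpNorm_sum_le (f := F) (μ := μ)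
    (fun i hi => (hF i hi).aestronglyMeasurable) (ENNReal.one_le_ofReal.2 hq)

lemma lintegral_rpow_le_const_mul {F G : α → ℝ≥0∞} (hG : Measurable G) {q : ℝ} (hq : 0 < q)
    {c : ℝ≥0∞} (h : ∀ x, F x ≤ c * G x) :
    (∫⁻ x, F x ^ q ∂μ) ^ (1 / q) ≤ c * (∫⁻ x, G x ^ q ∂μ) ^ (1 / q) :=
  calc (∫⁻ x, F x ^ q ∂μ) ^ (1 / q) ≤ (∫⁻ x, (c * G x) ^ q ∂μ) ^ (1 / q) := by
        gcongr with x; exact h x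
    _ = c * (∫⁻ x, G x ^ q ∂μ) ^ (1 / q) := by
        simp_rw [ENNReal.mul_rpow_of_nonneg _ _ hq.le]
        rw [lintegral_const_mul _ (hG.pow_const q), ENNReal.mul_rpow_of_nonneg _ _ (by positivity),
          ← ENNReal.rpow_mul, mul_one_div_cancel hq.ne', ENNReal.rpow_one]

lemma lintegral_le_tsum_zpow_mul_meas {g : α → ℝ≥0∞} (hg : Measurable g) {c : ℝ≥0∞}
    (hc0 : c ≠ 0) (hc : c ≠ ∞) :
    ∫⁻ x, g x ∂μ ≤ ∑' k : ℤ, c * 2 ^ k * μ {x | c * 2 ^ k < g x} := by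
  have hm : ∀ t, MeasurableSet {x | t < g x} := fun t => hg measurableSet_Ioi
  have hpt : ∀ x, g x ≤ ∑' k : ℤ, {y | c * 2 ^ k < g y}.indicator (fun _ => c * 2 ^ k) x := by
    intro x
    calc g x = c * (g x / c) := (ENNReal.mul_div_cancel hc0 hc).symm
      _ ≤ c * ∑' k : ℤ, if (2 : ℝ≥0∞) ^ k < g x / c then 2 ^ k else 0 :=
        mul_le_mul_right (le_tsum_two_zpow_ite _) _
      _ = _ := by
        rw [← ENNReal.tsum_mul_left]
        refine tsum_congr fun k => ?_
        simp only [indicator, mem_ofPred_eq,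
          ENNReal.lt_div_iff_mul_lt (Or.inl hc0) (Or.inl hc), mul_comm _ c]
        split_ifs <;> simp
  calc ∫⁻ x, g x ∂μ
      ≤ ∫⁻ x, ∑' k : ℤ, {y | c * 2 ^ k < g y}.indicator (fun _ => c * 2 ^ k) x ∂μ :=
        lintegral_mono hpt
    _ = _ := by
      rw [lintegral_tsum fun k => (measurable_const.indicator (hm _)).aemeasurable]
      simp_rw [lintegral_indicator_const (hm _)]

lemma exists_forall_two_pow_mul_le_lt (E : Set α) {S : Set (Set α)}
    (hS : ∀ Q ∈ S, μ Q ≠ ∞) : ∃ lvl : Set α → ℕ, ∀ Q ∈ S, μ (E ∩ Q) ≠ 0 →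
      2 ^ lvl Q * μ (E ∩ Q) ≤ μ Q ∧ μ Q < 2 ^ (lvl Q + 1) * μ (E ∩ Q) := by
  have hlvl : ∀ Q, ∃ j : ℕ, Q ∈ S → μ (E ∩ Q) ≠ 0 →
      2 ^ j * μ (E ∩ Q) ≤ μ Q ∧ μ Q < 2 ^ (j + 1) * μ (E ∩ Q) := fun Q => by
    by_cases h : Q ∈ S ∧ μ (E ∩ Q) ≠ 0
    · obtain ⟨j, hj⟩ := exists_two_pow_mul_le_lt h.2 (measure_mono inter_subset_right) (hS Q h.1)
      exact ⟨j, fun _ _ => hj⟩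
    · exact ⟨0, fun h1 h2 => absurd ⟨h1, h2⟩ h⟩
  choose lvl hlvl using hlvl
  exact ⟨lvl, hlvl⟩

lemma setLIntegral_le_layerConst_mul {g : α → ℝ≥0∞} (hg : Measurable g) (p : ℝ) {c : ℝ≥0∞}
    (hc0 : c ≠ 0) (hc : c ≠ ∞) {R : Set α}
    (h : ∀ k : ℤ, μ ({x | c * 2 ^ k < g x} ∩ R) * (2 ^ k) ^ p ≤ μ R) :
    ∫⁻ x in R, g x ∂μ ≤ layerConst p * (c * μ R) := by
  have hterm : ∀ k : ℤ, c * 2 ^ k * (μ.restrict R) {x | c * 2 ^ k < g x} ≤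
      c * μ R * (2 ^ k * min 1 ((2 ^ k) ^ p)⁻¹) := fun k => by
    have hmin : μ ({x | c * 2 ^ k < g x} ∩ R) ≤ μ R * min 1 ((2 ^ k) ^ p)⁻¹ := by
      rw [mul_min, mul_one, ← div_eq_mul_inv]
      exact le_min (measure_mono inter_subset_right) ((ENNReal.le_div_iff_mul_le
        (Or.inl (by simp [two_zpow_ne_zero, two_zpow_ne_top]))
        (Or.inl (by simp [two_zpow_ne_zero, two_zpow_ne_top]))).2 (h k))
    rw [Measure.restrict_apply (measurableSet_lt measurable_const hg)]
    calc c * 2 ^ k * μ ({x | c * 2 ^ k < g x} ∩ R)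
        ≤ c * 2 ^ k * (μ R * min 1 ((2 ^ k) ^ p)⁻¹) := by gcongr
      _ = c * μ R * (2 ^ k * min 1 ((2 ^ k) ^ p)⁻¹) := by ring
  calc ∫⁻ x in R, g x ∂μ ≤ ∑' k : ℤ, c * 2 ^ k * (μ.restrict R) {x | c * 2 ^ k < g x} :=
        lintegral_le_tsum_zpow_mul_meas hg hc0 hc
    _ ≤ ∑' k : ℤ, c * μ R * (2 ^ k * min 1 ((2 ^ k) ^ p)⁻¹) := ENNReal.tsum_le_tsum hterm
    _ = layerConst p * (c * μ R) := by rw [ENNReal.tsum_mul_left, layerConst, mul_comm]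

lemma setLIntegral_le_of_forall_mul_meas_rpow_le {g : α → ℝ≥0∞} (hg : Measurable g) {p q : ℝ}
    (hpq : p.HolderConjugate q) {B : ℝ≥0∞} (hB : B ≠ ∞)
    (h : ∀ t, t * μ {x | t < g x} ^ (1 / p) ≤ B) {R : Set α} (hR : μ R ≠ ∞) :
    ∫⁻ x in R, g x ∂μ ≤ layerConst p * B * μ R ^ (1 / q) := by
  have hp := hpq.pos
  have hdist : ∀ t, t ^ p * μ {x | t < g x} ≤ B ^ p := fun t => by
    simpa [ENNReal.mul_rpow_of_nonneg _ _ hp.le, ← ENNReal.rpow_mul, hp.ne'] using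
      ENNReal.rpow_le_rpow (h t) hp.le
  rcases eq_or_ne (μ R) 0 with hR0 | hR0
  · simp [Measure.restrict_eq_zero.2 hR0]
  rcases eq_or_ne B 0 with rfl | hB0
  · refine (lintegral_le_tsum_zpow_mul_meas hg one_ne_zero one_ne_top).trans (le_of_eq ?_)
    refine (ENNReal.tsum_eq_zero.2 fun k => ?_).trans (by simp)
    have hnull := hdist (1 * 2 ^ k)
    rw [ENNReal.zero_rpow_of_pos hp, nonpos_iff_eq_zero, mul_eq_zero,
      or_iff_right (by simp [two_zpow_ne_zero, two_zpow_ne_top])] at hnull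
    rw [Measure.restrict_apply (measurableSet_lt measurable_const hg),
      measure_mono_null inter_subset_left hnull, mul_zero]
  -- The scale `c` is chosen so that the weak-type bound `(B / t) ^ p` equals `μ R` at `t = c`.
  set c := B / μ R ^ (1 / p)
  have hc0 : c ≠ 0 := ENNReal.div_ne_zero.2 ⟨hB0, by simp [hR0, hR]⟩
  have hc : c ≠ ∞ := ENNReal.div_ne_top hB (by simp [hR0, hR])
  have hcp : c ^ p * μ R = B ^ p := by
    rw [ENNReal.div_rpow_of_nonneg _ _ hp.le, ← ENNReal.rpow_mul, one_div_mul_cancel hp.ne',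
      ENNReal.rpow_one, ENNReal.div_mul_cancel hR0 hR]
  have hcR : c * μ R = B * μ R ^ (1 / q) := by
    conv_lhs => rw [← ENNReal.rpow_one (μ R), ← div_one (1 : ℝ), ← hpq.one_div_add_one_div,
      ENNReal.rpow_add _ _ hR0 hR, ← mul_assoc, ENNReal.div_mul_cancel (by simp [hR0, hR])
      (by simp [hR0, hR])]
  refine (setLIntegral_le_layerConst_mul hg p hc0 hc fun k => ?_).trans_eq
    (by rw [hcR, mul_assoc])
  rw [← ENNReal.mul_le_mul_iff_right (a := c ^ p) (by simp [hc0, hc]) (by simp [hc0, hc]), hcp]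
  calc c ^ p * (μ ({x | c * 2 ^ k < g x} ∩ R) * (2 ^ k) ^ p)
      = (c * 2 ^ k) ^ p * μ ({x | c * 2 ^ k < g x} ∩ R) := by
        rw [ENNReal.mul_rpow_of_nonneg _ _ hp.le]; ring
    _ ≤ (c * 2 ^ k) ^ p * μ {x | c * 2 ^ k < g x} := by gcongr; exact inter_subset_left
    _ ≤ B ^ p := hdist _

lemma mul_meas_rpow_le_of_forall_setLIntegral_le [SigmaFinite μ] {g : α → ℝ≥0∞}
    (hg : Measurable g) {p q : ℝ} (hpq : p.HolderConjugate q) {B : ℝ≥0∞}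
    (h : ∀ E, MeasurableSet E → μ E ≠ ∞ → ∫⁻ x in E, g x ∂μ ≤ B * μ E ^ (1 / q)) (t : ℝ≥0∞) :
    t * μ {x | t < g x} ^ (1 / p) ≤ B := by
  have hm : MeasurableSet {x | t < g x} := hg measurableSet_Ioi
  have hE : ∀ i, t * μ ({x | t < g x} ∩ spanningSets μ i) ^ (1 / p) ≤ B := fun i => by
    have hEm := hm.inter (measurableSet_spanningSets μ i)
    have hEtop : μ ({x | t < g x} ∩ spanningSets μ i) ≠ ∞ :=
      ((measure_mono inter_subset_right).trans_lt (measure_spanningSets_lt_top μ i)).ne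
    refine mul_rpow_le_of_mul_le_mul_rpow (one_div_pos.2 hpq.pos)
      (hpq.one_div_add_one_div.trans (div_one 1)) hEtop ?_
    calc t * μ ({x | t < g x} ∩ spanningSets μ i)
        = ∫⁻ _ in {x | t < g x} ∩ spanningSets μ i, t ∂μ := (setLIntegral_const _ _).symm
      _ ≤ ∫⁻ x in {x | t < g x} ∩ spanningSets μ i, g x ∂μ :=
        setLIntegral_mono hg fun x hx => hx.1.le
      _ ≤ _ := h _ hEm hEtop
  rw [← Measure.iSup_restrict_spanningSets, iSup_rpow _ (one_div_pos.2 hpq.pos), ENNReal.mul_iSup]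
  exact iSup_le fun i => by rw [Measure.restrict_apply hm]; exact hE i

end Lebesgue

lemma rpow_sum_of_pairwiseDisjoint_support {α ι : Type*} {t : Finset ι} {U : ι → Set α}
    (hU : (t : Set ι).PairwiseDisjoint U) {f : ι → α → ℝ≥0∞}
    (hf : ∀ i ∈ t, ∀ x ∉ U i, f i x = 0) {q : ℝ} (hq : 0 < q) (x : α) :
    (∑ i ∈ t, f i x) ^ q = ∑ i ∈ t, f i x ^ q := by
  by_cases hx : ∃ i ∈ t, x ∈ U i
  · obtain ⟨i, hi, hxi⟩ := hx
    have hzero : ∀ j ∈ t, j ≠ i → f j x = 0 := fun j hj hji =>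
      hf j hj x fun hxj => Set.disjoint_left.1 (hU hj hi hji) hxj hxi
    rw [Finset.sum_eq_single_of_mem i hi hzero, Finset.sum_eq_single_of_mem i hi
      fun j hj hji => by rw [hzero j hj hji, ENNReal.zero_rpow_of_pos hq]]
  · simp only [not_exists, not_and] at hx
    rw [Finset.sum_eq_zero fun j hj => hf j hj x (hx j hj), Finset.sum_eq_zero fun j hj => by
      rw [hf j hj x (hx j hj), ENNReal.zero_rpow_of_pos hq], ENNReal.zero_rpow_of_pos hq]

lemma exists_pairwiseDisjoint_cover_of_nested_or_disjoint {α : Type*} (s : Finset (Set α))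
    (h : (s : Set (Set α)).Pairwise fun Q Q' => Q ⊆ Q' ∨ Q' ⊆ Q ∨ Disjoint Q Q') :
    ∃ t ⊆ s, (t : Set (Set α)).PairwiseDisjoint id ∧ ∀ Q ∈ s, ∃ R ∈ t, Q ⊆ R := by
  classical
  refine ⟨s.filter (Maximal (· ∈ s)), Finset.filter_subset _ _, ?_, fun Q hQ => ?_⟩
  · intro R hR R' hR' hne
    simp only [Finset.coe_filter, mem_ofPred_eq] at hR hR'
    rcases h hR.1 hR'.1 hne with hsub | hsub | hdisj
    · exact absurd (hR.2.eq_of_le hR'.1 hsub) hne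
    · exact absurd (hR'.2.eq_of_le hR.1 hsub).symm hne
    · exact hdisj
  · obtain ⟨R, hQR, hR⟩ := s.exists_le_maximal hQ
    exact ⟨R, Finset.mem_filter.2 ⟨hR.prop, hR⟩, hQR⟩

def dyadicCube (n : ℕ) (k : ℤ) (m : Fin n → ℤ) : Set (Rn n) :=
  {x | ∀ i, ⌊(2 : ℝ) ^ k * x i⌋ = m i}

lemma isDyadicCube_iff {n : ℕ} {Q : Set (Rn n)} :
    IsDyadicCube n Q ↔ ∃ k m, Q = dyadicCube n k m := by
  have hcube : ∀ (k : ℤ) (m : Fin n → ℤ), {x : Rn n | ∀ i, (2 : ℝ) ^ (-k) * m i ≤ x i ∧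
      x i < (2 : ℝ) ^ (-k) * (m i + 1)} = dyadicCube n k m := fun k m => by
    ext x
    refine forall_congr' fun i => ?_
    rw [Int.floor_eq_iff, zpow_neg, inv_mul_le_iff₀ (by positivity),
      lt_inv_mul_iff₀ (by positivity)]
  simp only [IsDyadicCube, hcube]

lemma floor_two_zpow_mul_of_le {k' k : ℤ} (h : k' ≤ k) (y : ℝ) :
    ⌊(2 : ℝ) ^ k' * y⌋ = ⌊(2 : ℝ) ^ k * y⌋ / (2 ^ (k - k').toNat : ℕ) := by
  rw [← Int.floor_div_natCast]
  congr 1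
  rw [Nat.cast_pow, Nat.cast_ofNat, ← zpow_natCast, Int.toNat_of_nonneg (sub_nonneg.2 h),
    zpow_sub₀ two_ne_zero]
  field_simp

lemma dyadicCube_subset_of_mem {n : ℕ} {k k' : ℤ} {m m' : Fin n → ℤ} (h : k' ≤ k) {x : Rn n}
    (hx : x ∈ dyadicCube n k m) (hx' : x ∈ dyadicCube n k' m') :
    dyadicCube n k m ⊆ dyadicCube n k' m' := fun z hz i => by
  rw [← hx' i, floor_two_zpow_mul_of_le h, floor_two_zpow_mul_of_le h, hz i, hx i]

lemma IsDyadicCube.subset_or_subset_or_disjoint {n : ℕ} {Q Q' : Set (Rn n)}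
    (hQ : IsDyadicCube n Q) (hQ' : IsDyadicCube n Q') : Q ⊆ Q' ∨ Q' ⊆ Q ∨ Disjoint Q Q' := by
  by_cases hd : Disjoint Q Q'
  · exact Or.inr (Or.inr hd)
  obtain ⟨x, hx, hx'⟩ := not_disjoint_iff.1 hd
  obtain ⟨k, m, rfl⟩ := isDyadicCube_iff.1 hQ
  obtain ⟨k', m', rfl⟩ := isDyadicCube_iff.1 hQ'
  rcases le_total k' k with h | h
  · exact Or.inl (dyadicCube_subset_of_mem h hx hx')
  · exact Or.inr (Or.inl (dyadicCube_subset_of_mem h hx' hx))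

lemma IsDyadicCube.measurableSet {n : ℕ} {Q : Set (Rn n)} (hQ : IsDyadicCube n Q) :
    MeasurableSet Q := by
  obtain ⟨k, m, rfl⟩ := hQ
  simp only [ofPred_forall, ofPred_and]
  exact MeasurableSet.iInter fun i =>
    (measurableSet_le measurable_const (measurable_pi_apply i)).inter
      (measurableSet_lt (measurable_pi_apply i) measurable_const)

lemma IsDyadicCube.volume_ne_zero {n : ℕ} {Q : Set (Rn n)} (hQ : IsDyadicCube n Q) :
    volume Q ≠ 0 := by
  obtain ⟨k, m, rfl⟩ := hQ
  have hpi : {x : Rn n | ∀ i, (2 : ℝ) ^ (-k) * m i ≤ x i ∧ x i < (2 : ℝ) ^ (-k) * (m i + 1)} =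
      univ.pi fun i => Ico ((2 : ℝ) ^ (-k) * m i) ((2 : ℝ) ^ (-k) * (m i + 1)) := by
    ext x; simp [Set.mem_pi]
  rw [hpi, volume_pi_pi, Finset.prod_ne_zero_iff]
  refine fun i _ => Real.volume_Ico ▸ (ENNReal.ofReal_pos.2 ?_).ne'
  rw [mul_add, mul_one, add_sub_cancel_left]
  positivity

lemma IsDyadicCube.dAvg_ne_top {n : ℕ} {Q : Set (Rn n)} (hQ : IsDyadicCube n Q)
    {w : Rn n → ℝ≥0∞} (hw : LocInt w) : dAvg w Q ≠ ∞ :=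
  ENNReal.mul_ne_top (ENNReal.inv_ne_top.2 hQ.volume_ne_zero) (hw Q hQ).ne

lemma countable_setOf_isDyadicCube (n : ℕ) : {Q : Set (Rn n) | IsDyadicCube n Q}.Countable := by
  have : {Q : Set (Rn n) | IsDyadicCube n Q} =
      range fun km : ℤ × (Fin n → ℤ) => dyadicCube n km.1 km.2 := by
    ext Q; simp [isDyadicCube_iff, eq_comm]
  rw [this]
  exact countable_range _

lemma sUnion_setOf_isDyadicCube (n : ℕ) : ⋃₀ {Q : Set (Rn n) | IsDyadicCube n Q} = univ :=
  eq_univ_of_forall fun x => ⟨dyadicCube n 0 fun i => ⌊x i⌋,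
    isDyadicCube_iff.2 ⟨0, _, rfl⟩, fun i => by simp⟩

lemma LocInt.withDensity_ne_top {n : ℕ} {w : Rn n → ℝ≥0∞} (hw : LocInt w) {Q : Set (Rn n)}
    (hQ : IsDyadicCube n Q) : volume.withDensity w Q ≠ ∞ := by
  rw [withDensity_apply _ hQ.measurableSet]; exact (hw Q hQ).ne

lemma LocInt.sigmaFinite_withDensity {n : ℕ} {w : Rn n → ℝ≥0∞} (hw : LocInt w) :
    SigmaFinite (volume.withDensity w) :=
  Measure.sigmaFinite_of_countable (countable_setOf_isDyadicCube n)
    (fun _ hQ => (hw.withDensity_ne_top hQ).lt_top) (sUnion_setOf_isDyadicCube n)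

section Operator

variable {n : ℕ} {Qc : Set (Set (Rn n))}

lemma measurable_linOp (hQc : Qc.Countable) (hQm : ∀ Q ∈ Qc, MeasurableSet Q)
    (τ : Set (Rn n) → ℝ≥0) (g : Rn n → ℝ≥0∞) : Measurable (linOp Qc τ g) :=
  have := hQc.to_subtype
  Measurable.tsum fun Q => measurable_const.indicator (hQm Q Q.2)

lemma lintegral_linOp_mul (hQc : Qc.Countable) (hQm : ∀ Q ∈ Qc, MeasurableSet Q)
    (τ : Set (Rn n) → ℝ≥0) (g : Rn n → ℝ≥0∞) {h : Rn n → ℝ≥0∞} (hh : Measurable h) :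
    ∫⁻ x, linOp Qc τ g x * h x = ∑' Q : Qc, τ Q * dAvg g Q * ∫⁻ x in Q, h x := by
  have := hQc.to_subtype
  simp only [linOp, ← ENNReal.tsum_mul_right, ← indicator_mul_left]
  rw [lintegral_tsum (f := fun (Q : Qc) x => (Q : Set (Rn n)).indicator
    (fun y => (τ Q : ℝ≥0∞) * dAvg g Q * h y) x)
    fun Q => ((measurable_const.mul hh).indicator (hQm Q Q.2)).aemeasurable]
  exact tsum_congr fun Q => by rw [lintegral_indicator (hQm Q Q.2), lintegral_const_mul _ hh]

lemma lintegral_linOp_mul_comm (hQc : Qc.Countable) (hQm : ∀ Q ∈ Qc, MeasurableSet Q)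
    (τ : Set (Rn n) → ℝ≥0) {g h : Rn n → ℝ≥0∞} (hg : Measurable g) (hh : Measurable h) :
    ∫⁻ x, linOp Qc τ g x * h x = ∫⁻ x, g x * linOp Qc τ h x := by
  simp_rw [mul_comm (g _), lintegral_linOp_mul hQc hQm τ _ hh,
    lintegral_linOp_mul hQc hQm τ _ hg, dAvg]
  exact tsum_congr fun Q => by ring

lemma setLIntegral_linOp_withDensity (hQc : Qc.Countable) (hQm : ∀ Q ∈ Qc, MeasurableSet Q)
    (τ : Set (Rn n) → ℝ≥0) {w σ f : Rn n → ℝ≥0∞} (hw : Measurable w) (hσ : Measurable σ)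
    (hf : Measurable f) {E : Set (Rn n)} (hE : MeasurableSet E) :
    ∫⁻ x in E, linOp Qc τ (fun x => f x * σ x) x ∂volume.withDensity w =
      ∫⁻ x, f x * linOp Qc τ (E.indicator w) x ∂volume.withDensity σ := by
  have hT := measurable_linOp hQc hQm τ
  calc ∫⁻ x in E, linOp Qc τ (fun x => f x * σ x) x ∂volume.withDensity w
      = ∫⁻ x, linOp Qc τ (fun x => f x * σ x) x * E.indicator w x := by
        rw [setLIntegral_withDensity_eq_setLIntegral_mul _ hw (hT _) hE, ← lintegral_indicator hE]
        exact lintegral_congr fun x => (indicator_mul_left E w _).trans (mul_comm _ _)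
    _ = ∫⁻ x, (f x * σ x) * linOp Qc τ (E.indicator w) x :=
        lintegral_linOp_mul_comm hQc hQm τ (hf.mul hσ) (hw.indicator hE)
    _ = ∫⁻ x, (f * linOp Qc τ (E.indicator w)) x ∂volume.withDensity σ := by
        rw [lintegral_withDensity_eq_lintegral_mul _ hσ (hf.mul (hT _))]
        exact lintegral_congr fun x => by simp only [Pi.mul_apply]; ring

lemma lpNorm_eq_withDensity {σ g : Rn n → ℝ≥0∞} (hσ : Measurable σ) (hg : Measurable g)
    (p : ℝ) : lpNorm p σ g = (∫⁻ x, g x ^ p ∂volume.withDensity σ) ^ (1 / p) := by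
  rw [lintegral_withDensity_eq_lintegral_mul _ hσ (hg.pow_const p), lpNorm]
  simp_rw [Pi.mul_apply, mul_comm (σ _)]

lemma wLpNorm_le_iff {w g : Rn n → ℝ≥0∞} (hg : Measurable g) {p : ℝ} (hp : 0 < p)
    {B : ℝ≥0∞} :
    wLpNorm p w g ≤ B ↔ ∀ t, t * volume.withDensity w {x | t < g x} ^ (1 / p) ≤ B := by
  have hw : ∀ t : ℝ≥0∞, ∫⁻ x in {x | t < g x}, w x = volume.withDensity w {x | t < g x} :=
    fun t => (withDensity_apply w (hg measurableSet_Ioi)).symm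
  simp only [wLpNorm, iSup₂_le_iff, hw]
  refine ⟨fun h t => ?_, fun h t _ => h t⟩
  induction t using ENNReal.recTopCoe with
  | top => simp [ENNReal.zero_rpow_of_pos (inv_pos.2 hp)]
  | coe t =>
    rcases eq_or_ne t 0 with rfl | ht
    · simp
    · exact h t (pos_iff_ne_zero.2 ht)

lemma dAvg_indicator {w : Rn n → ℝ≥0∞} {E Q : Set (Rn n)} (hE : MeasurableSet E)
    (hQ : MeasurableSet Q) :
    dAvg (E.indicator w) Q = (volume Q)⁻¹ * volume.withDensity w (E ∩ Q) := by
  rw [dAvg, setLIntegral_indicator hE, withDensity_apply _ (hE.inter hQ)]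

lemma dAvg_indicator_of_subset {w : Rn n → ℝ≥0∞} {R Q : Set (Rn n)} (hR : MeasurableSet R)
    (hQR : Q ⊆ R) : dAvg (R.indicator w) Q = dAvg w Q := by
  rw [dAvg, dAvg, setLIntegral_indicator hR, inter_eq_right.2 hQR]

def testSum (Qc : Set (Set (Rn n))) (τ : Set (Rn n) → ℝ≥0) (w : Rn n → ℝ≥0∞) (R : Set (Rn n))
    (x : Rn n) : ℝ≥0∞ :=
  ∑' Q : {Q : Set (Rn n) // Q ∈ Qc ∧ Q ⊆ R}, (Q : Set (Rn n)).indicator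
    (fun _ => (τ Q : ℝ≥0∞) * dAvg w Q) x

lemma measurable_testSum (hQc : Qc.Countable) (hQm : ∀ Q ∈ Qc, MeasurableSet Q)
    (τ : Set (Rn n) → ℝ≥0) (w : Rn n → ℝ≥0∞) (R : Set (Rn n)) :
    Measurable (testSum Qc τ w R) :=
  have : Countable {Q : Set (Rn n) // Q ∈ Qc ∧ Q ⊆ R} :=
    (hQc.mono fun _ hQ => hQ.1 : {Q | Q ∈ Qc ∧ Q ⊆ R}.Countable).to_subtype
  Measurable.tsum fun Q => measurable_const.indicator (hQm Q Q.2.1)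

lemma testSum_eq_zero_of_notMem (τ : Set (Rn n) → ℝ≥0) (w : Rn n → ℝ≥0∞) {R : Set (Rn n)}
    {x : Rn n} (hx : x ∉ R) : testSum Qc τ w R x = 0 :=
  ENNReal.tsum_eq_zero.2 fun Q => indicator_of_notMem (fun hxQ => hx (Q.2.2 hxQ)) _

lemma sum_le_testSum (τ : Set (Rn n) → ℝ≥0) (w : Rn n → ℝ≥0∞) {R : Set (Rn n)}
    {u : Finset (Set (Rn n))} (hu : ∀ Q ∈ u, Q ∈ Qc ∧ Q ⊆ R) (x : Rn n) :
    ∑ Q ∈ u, Q.indicator (fun _ => (τ Q : ℝ≥0∞) * dAvg w Q) x ≤ testSum Qc τ w R x := by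
  classical
  rw [← Finset.sum_subtype_of_mem _ hu]
  exact ENNReal.sum_le_tsum _

lemma testSum_le_linOp (τ : Set (Rn n) → ℝ≥0) {w : Rn n → ℝ≥0∞} {R : Set (Rn n)}
    (hR : MeasurableSet R) (x : Rn n) :
    testSum Qc τ w R x ≤ linOp Qc τ (R.indicator w) x := by
  refine le_of_eq_of_le (tsum_congr fun Q => ?_) (ENNReal.tsum_comp_le_tsum_of_injective
    (f := fun Q : {Q : Set (Rn n) // Q ∈ Qc ∧ Q ⊆ R} => (⟨Q.1, Q.2.1⟩ : Qc))
    (fun Q Q' h => Subtype.ext (Subtype.mk.inj h)) _)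
  rw [dAvg_indicator_of_subset hR Q.2.2]

lemma lintegral_rpow_testSum_le {p q : ℝ} (hpq : p.HolderConjugate q) {w σ : Rn n → ℝ≥0∞}
    (hσ : Measurable σ) {τ : Set (Rn n) → ℝ≥0} {R : Set (Rn n)} (hR : R ∈ Qc)
    (hRm : MeasurableSet R) (hmeas : Measurable (testSum Qc τ w R))
    (hR0 : volume.withDensity w R ≠ 0) (hRtop : volume.withDensity w R ≠ ∞) :
    ∫⁻ x, testSum Qc τ w R x ^ q ∂volume.withDensity σ ≤
      linTestDual Qc τ p w σ ^ q * volume.withDensity w R := by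
  have hq := hpq.symm.pos
  set X := ∫⁻ x, testSum Qc τ w R x ^ q ∂volume.withDensity σ
  set a := volume.withDensity w R
  have hterm : a ^ (-(1 / q)) * X ^ (1 / q) ≤ linTestDual Qc τ p w σ := by
    have h1 : 1 - 1 / p = 1 / q := by linarith [hpq.one_div_add_one_div, div_one (1 : ℝ)]
    have : _ ≤ linTestDual Qc τ p w σ := le_iSup₂ (f := fun R (_ : R ∈ Qc) =>
      (∫⁻ x in R, w x) ^ (-(1 - 1 / p)) * lpNorm (p / (p - 1)) σ (testSum Qc τ w R)) R hR
    rwa [← withDensity_apply _ hRm, ← hpq.conjugate_eq, lpNorm_eq_withDensity hσ hmeas, h1] at this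
  have hX : X ^ (1 / q) ≤ linTestDual Qc τ p w σ * a ^ (1 / q) :=
    calc X ^ (1 / q) = a ^ (1 / q) * (a ^ (-(1 / q)) * X ^ (1 / q)) := by
          rw [← mul_assoc, ← ENNReal.rpow_add _ _ hR0 hRtop, add_neg_cancel, ENNReal.rpow_zero,
            one_mul]
      _ ≤ a ^ (1 / q) * linTestDual Qc τ p w σ := by gcongr
      _ = _ := mul_comm _ _
  calc X = (X ^ (1 / q)) ^ q := by
        rw [← ENNReal.rpow_mul, one_div_mul_cancel hq.ne', ENNReal.rpow_one]
    _ ≤ (linTestDual Qc τ p w σ * a ^ (1 / q)) ^ q := ENNReal.rpow_le_rpow hX hq.le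
    _ = _ := by
        rw [ENNReal.mul_rpow_of_nonneg _ _ hq.le, ← ENNReal.rpow_mul, one_div_mul_cancel hq.ne',
          ENNReal.rpow_one]

end Operator

section LowerBound

variable {n : ℕ} {Qc : Set (Set (Rn n))} {w σ : Rn n → ℝ≥0∞}

lemma lintegral_rpow_le_of_weakType {p q : ℝ} (hpq : p.HolderConjugate q) (hQc : Qc.Countable)
    (hQm : ∀ Q ∈ Qc, MeasurableSet Q) (τ : Set (Rn n) → ℝ≥0) (hw : Measurable w)
    (hσ : Measurable σ) {C : ℝ≥0∞} (hC : C ≠ ∞)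
    (hweak : ∀ f, Measurable f → wLpNorm p w (linOp Qc τ (fun x => f x * σ x)) ≤ C * lpNorm p σ f)
    {R : Set (Rn n)} (hRm : MeasurableSet R) (hR : volume.withDensity w R ≠ ∞)
    {G : Rn n → ℝ≥0∞} (hG : Measurable G) (hGT : ∀ x, G x ≤ linOp Qc τ (R.indicator w) x)
    (hX : ∫⁻ x, G x ^ q ∂volume.withDensity σ ≠ ∞) :
    (∫⁻ x, G x ^ q ∂volume.withDensity σ) ^ (1 / q) ≤
      layerConst p * C * volume.withDensity w R ^ (1 / q) := by
  have hp := hpq.pos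
  set X := ∫⁻ x, G x ^ q ∂volume.withDensity σ
  -- `f = G^{q-1}` is the function for which Hölder's inequality `∫ f G dν ≤ ‖f‖_p ‖G‖_q` is sharp.
  set f : Rn n → ℝ≥0∞ := fun x => G x ^ (q - 1)
  have hf : Measurable f := hG.pow_const _
  have hfX : lpNorm p σ f = X ^ (1 / p) := by
    simp_rw [lpNorm_eq_withDensity hσ hf, f, ← ENNReal.rpow_mul, hpq.symm.sub_one_mul_conj, X]
  have hT := measurable_linOp hQc hQm τ (fun x => f x * σ x)
  have hkol : ∫⁻ x in R, linOp Qc τ (fun x => f x * σ x) x ∂volume.withDensity w ≤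
      layerConst p * (C * X ^ (1 / p)) * volume.withDensity w R ^ (1 / q) :=
    setLIntegral_le_of_forall_mul_meas_rpow_le hT hpq
      (ENNReal.mul_ne_top hC (ENNReal.rpow_ne_top_of_nonneg (by positivity) hX))
      ((wLpNorm_le_iff hT hp).1 (hfX ▸ hweak f hf)) hR
  have hdual : X ≤ ∫⁻ x in R, linOp Qc τ (fun x => f x * σ x) x ∂volume.withDensity w := by
    rw [setLIntegral_linOp_withDensity hQc hQm τ hw hσ hf hRm]
    refine lintegral_mono fun x => ?_
    calc G x ^ q = G x ^ ((q - 1) + 1) := by rw [sub_add_cancel]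
      _ = f x * G x := by
          rw [ENNReal.rpow_add_of_nonneg _ _ (sub_nonneg.2 hpq.symm.lt.le) zero_le_one,
            ENNReal.rpow_one]
      _ ≤ f x * linOp Qc τ (R.indicator w) x := mul_le_mul_right (hGT x) _
  simpa using mul_rpow_le_of_mul_le_mul_rpow (x := 1) (one_div_pos.2 hpq.symm.pos)
    (by linarith [hpq.one_div_add_one_div, div_one (1 : ℝ)] : 1 / q + 1 / p = 1) hX
    (y := layerConst p * C * volume.withDensity w R ^ (1 / q))
    (by rw [one_mul]; exact hdual.trans (hkol.trans_eq (by ring)))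

lemma lintegral_rpow_sum_indicator_ne_top {q : ℝ} (hq : 0 < q)
    (hQd : ∀ Q ∈ Qc, IsDyadicCube n Q) (τ : Set (Rn n) → ℝ≥0) (hLw : LocInt w) (hLσ : LocInt σ)
    {R : Set (Rn n)} (hR : R ∈ Qc) (s : Finset {Q : Set (Rn n) // Q ∈ Qc ∧ Q ⊆ R}) :
    ∫⁻ x, (∑ Q ∈ s, (Q : Set (Rn n)).indicator (fun _ => (τ Q : ℝ≥0∞) * dAvg w Q) x) ^ q
      ∂volume.withDensity σ ≠ ∞ := by
  set M := ∑ Q ∈ s, (τ Q : ℝ≥0∞) * dAvg w Q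
  have hM : ∀ x, (∑ Q ∈ s, (Q : Set (Rn n)).indicator (fun _ => (τ Q : ℝ≥0∞) * dAvg w Q) x) ^ q
      ≤ R.indicator (fun _ => M ^ q) x := fun x => by
    by_cases hx : x ∈ R
    · rw [indicator_of_mem hx]
      exact ENNReal.rpow_le_rpow (Finset.sum_le_sum fun Q _ => indicator_le_self _ _ x) hq.le
    · rw [indicator_of_notMem hx, Finset.sum_eq_zero fun Q _ =>
        indicator_of_notMem (fun hxQ => hx (Q.2.2 hxQ)) _, ENNReal.zero_rpow_of_pos hq]
  refine ne_top_of_le_ne_top ?_ (lintegral_mono hM)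
  rw [lintegral_indicator_const (hQd R hR).measurableSet]
  refine ENNReal.mul_ne_top (ENNReal.rpow_ne_top_of_nonneg hq.le ?_)
    (hLσ.withDensity_ne_top (hQd R hR))
  exact ENNReal.sum_ne_top.2 fun Q _ =>
    ENNReal.mul_ne_top coe_ne_top ((hQd _ Q.2.1).dAvg_ne_top hLw)

lemma linTestDual_le_of_weakType {p : ℝ} (hp : 1 < p) (hQc : Qc.Countable)
    (hQd : ∀ Q ∈ Qc, IsDyadicCube n Q) (τ : Set (Rn n) → ℝ≥0)
    (hw : Measurable w) (hσ : Measurable σ) (hLw : LocInt w) (hLσ : LocInt σ)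
    {C : ℝ≥0∞} (hC : C ≠ ∞)
    (hweak : ∀ f, Measurable f → wLpNorm p w (linOp Qc τ (fun x => f x * σ x)) ≤ C * lpNorm p σ f) :
    linTestDual Qc τ p w σ ≤ layerConst p * C := by
  have hpq : p.HolderConjugate (p / (p - 1)) := .conjExponent hp
  have hq := hpq.symm.pos
  have hQm : ∀ Q ∈ Qc, MeasurableSet Q := fun Q hQ => (hQd Q hQ).measurableSet
  refine iSup₂_le fun R hR => ?_
  have hRm := hQm R hR
  have hRtop := hLw.withDensity_ne_top (hQd R hR)
  have : Countable {Q : Set (Rn n) // Q ∈ Qc ∧ Q ⊆ R} :=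
    (hQc.mono fun _ hQ => hQ.1 : {Q | Q ∈ Qc ∧ Q ⊆ R}.Countable).to_subtype
  have hsum := lintegral_rpow_tsum_le_of_forall_finset (μ := volume.withDensity σ)
    (fun Q : {Q : Set (Rn n) // Q ∈ Qc ∧ Q ⊆ R} => measurable_const.indicator (hQm Q Q.2.1)) hq
    fun s => lintegral_rpow_le_of_weakType hpq hQc hQm τ hw hσ hC hweak hRm hRtop
      (Finset.measurable_sum _ fun Q _ => measurable_const.indicator (hQm Q Q.2.1))
      (fun x => (ENNReal.sum_le_tsum s).trans (testSum_le_linOp τ hRm x))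
      (lintegral_rpow_sum_indicator_ne_top hq hQd τ hLw hLσ hR s)
  have h1 : 1 - 1 / p = 1 / (p / (p - 1)) := by
    linarith [hpq.one_div_add_one_div, div_one (1 : ℝ)]
  change _ * lpNorm _ σ (testSum Qc τ w R) ≤ _
  rw [← withDensity_apply _ hRm, lpNorm_eq_withDensity hσ (measurable_testSum hQc hQm τ w R), h1]
  exact (mul_le_mul_right hsum _).trans (rpow_neg_mul_mul_rpow_le hRtop (one_div_pos.2 hq))

lemma le_linOpNormWeak {p : ℝ} (hp : 1 < p) (hQc : Qc.Countable)
    (hQd : ∀ Q ∈ Qc, IsDyadicCube n Q) (τ : Set (Rn n) → ℝ≥0)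
    (hw : Measurable w) (hσ : Measurable σ) (hLw : LocInt w) (hLσ : LocInt σ) :
    (layerConst p)⁻¹ * linTestDual Qc τ p w σ ≤ linOpNormWeak Qc τ p w σ := by
  refine le_sInf fun C hC => ?_
  rcases eq_or_ne C ∞ with rfl | hCtop
  · exact le_top
  calc (layerConst p)⁻¹ * linTestDual Qc τ p w σ ≤ (layerConst p)⁻¹ * (layerConst p * C) :=
        mul_le_mul_right (linTestDual_le_of_weakType hp hQc hQd τ hw hσ hLw hLσ hCtop hC) _
    _ = C := by
        rw [← mul_assoc, ENNReal.inv_mul_cancel (one_pos.trans_le (one_le_layerConst p)).ne'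
          (layerConst_ne_top hp), one_mul]

end LowerBound

section UpperBound

variable {n : ℕ} {Qc : Set (Set (Rn n))} {w σ : Rn n → ℝ≥0∞}

lemma lintegral_rpow_sum_le_of_packing {p q : ℝ} (hpq : p.HolderConjugate q)
    (hQc : Qc.Countable) (hQd : ∀ Q ∈ Qc, IsDyadicCube n Q) (τ : Set (Rn n) → ℝ≥0)
    (hσ : Measurable σ) (hLw : LocInt w) {E : Set (Rn n)} (hE : MeasurableSet E)
    {s : Finset (Set (Rn n))} (hs : ∀ Q ∈ s, Q ∈ Qc) {K : ℝ≥0∞}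
    (h0 : ∀ Q ∈ s, volume.withDensity w Q ≠ 0)
    (hK : ∀ Q ∈ s, volume.withDensity w Q ≤ K * volume.withDensity w (E ∩ Q)) :
    ∫⁻ x, (∑ Q ∈ s, Q.indicator (fun _ => (τ Q : ℝ≥0∞) * dAvg w Q) x) ^ q
        ∂volume.withDensity σ ≤
      linTestDual Qc τ p w σ ^ q * (K * volume.withDensity w E) := by
  classical
  have hq := hpq.symm.pos
  have hQm : ∀ Q ∈ Qc, MeasurableSet Q := fun Q hQ => (hQd Q hQ).measurableSet
  obtain ⟨t, hts, htd, hcov⟩ := exists_pairwiseDisjoint_cover_of_nested_or_disjoint s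
    fun Q hQ Q' hQ' _ => (hQd Q (hs Q hQ)).subset_or_subset_or_disjoint (hQd Q' (hs Q' hQ'))
  choose! r hrt hQr using hcov
  have hpt : ∀ x, ∑ Q ∈ s, Q.indicator (fun _ => (τ Q : ℝ≥0∞) * dAvg w Q) x ≤
      ∑ R ∈ t, testSum Qc τ w R x := fun x => by
    rw [← Finset.sum_fiberwise_of_maps_to hrt]
    refine Finset.sum_le_sum fun R _ => sum_le_testSum τ w (fun Q hQ => ?_) x
    obtain ⟨hQs, rfl⟩ := Finset.mem_filter.1 hQ
    exact ⟨hs Q hQs, hQr Q hQs⟩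
  calc ∫⁻ x, (∑ Q ∈ s, Q.indicator (fun _ => (τ Q : ℝ≥0∞) * dAvg w Q) x) ^ q
        ∂volume.withDensity σ
      ≤ ∫⁻ x, (∑ R ∈ t, testSum Qc τ w R x) ^ q ∂volume.withDensity σ :=
        lintegral_mono fun x => ENNReal.rpow_le_rpow (hpt x) hq.le
    _ = ∑ R ∈ t, ∫⁻ x, testSum Qc τ w R x ^ q ∂volume.withDensity σ := by
        rw [lintegral_congr fun x => rpow_sum_of_pairwiseDisjoint_support htd
          (f := fun R x => testSum Qc τ w R x) (fun R _ x hx => testSum_eq_zero_of_notMem τ w hx)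
          hq x]
        exact lintegral_finsetSum _ fun R _ => (measurable_testSum hQc hQm τ w R).pow_const q
    _ ≤ ∑ R ∈ t, linTestDual Qc τ p w σ ^ q * volume.withDensity w R :=
        Finset.sum_le_sum fun R hR => lintegral_rpow_testSum_le hpq hσ (hs R (hts hR))
          (hQm R (hs R (hts hR))) (measurable_testSum hQc hQm τ w R) (h0 R (hts hR))
          (hLw.withDensity_ne_top (hQd R (hs R (hts hR))))
    _ ≤ ∑ R ∈ t, linTestDual Qc τ p w σ ^ q * (K * volume.withDensity w (E ∩ R)) :=
        Finset.sum_le_sum fun R hR => by gcongr; exact hK R (hts hR)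
    _ = linTestDual Qc τ p w σ ^ q * (K * volume.withDensity w (⋃ R ∈ t, E ∩ R)) := by
        rw [measure_biUnion_finset (f := fun R => E ∩ R) (fun R hR R' hR' hne =>
          (htd hR hR' hne).mono inter_subset_right inter_subset_right)
          fun R hR => hE.inter (hQm R (hs R (hts hR))), Finset.mul_sum, Finset.mul_sum]
    _ ≤ linTestDual Qc τ p w σ ^ q * (K * volume.withDensity w E) := by
        gcongr; exact iUnion₂_subset fun _ _ => inter_subset_left

lemma lintegral_rpow_sum_dAvg_indicator_le_of_level {p q : ℝ} (hpq : p.HolderConjugate q)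
    (hQc : Qc.Countable) (hQd : ∀ Q ∈ Qc, IsDyadicCube n Q) (τ : Set (Rn n) → ℝ≥0)
    (hσ : Measurable σ) (hLw : LocInt w) {E : Set (Rn n)} (hE : MeasurableSet E)
    {s : Finset (Set (Rn n))} (hs : ∀ Q ∈ s, Q ∈ Qc) (j : ℕ)
    (hE0 : ∀ Q ∈ s, volume.withDensity w (E ∩ Q) ≠ 0)
    (hj : ∀ Q ∈ s, 2 ^ j * volume.withDensity w (E ∩ Q) ≤ volume.withDensity w Q ∧
      volume.withDensity w Q < 2 ^ (j + 1) * volume.withDensity w (E ∩ Q)) :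
    (∫⁻ x, (∑ Q ∈ s, Q.indicator (fun _ => (τ Q : ℝ≥0∞) * dAvg (E.indicator w) Q) x) ^ q
        ∂volume.withDensity σ) ^ (1 / q) ≤
      2 ^ (1 / q) * (2⁻¹ ^ (1 / p)) ^ j *
        (linTestDual Qc τ p w σ * volume.withDensity w E ^ (1 / q)) := by
  have hq := hpq.symm.pos
  have hQm : ∀ Q ∈ Qc, MeasurableSet Q := fun Q hQ => (hQd Q hQ).measurableSet
  have hle : ∀ x, ∑ Q ∈ s, Q.indicator (fun _ => (τ Q : ℝ≥0∞) * dAvg (E.indicator w) Q) x ≤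
      (2 ^ j)⁻¹ * ∑ Q ∈ s, Q.indicator (fun _ => (τ Q : ℝ≥0∞) * dAvg w Q) x := fun x => by
    rw [Finset.mul_sum]
    refine Finset.sum_le_sum fun Q hQ => ?_
    by_cases hx : x ∈ Q
    · have hQm' := hQm Q (hs Q hQ)
      have hb : dAvg (E.indicator w) Q ≤ (2 ^ j)⁻¹ * dAvg w Q := by
        rw [dAvg_indicator hE hQm', dAvg, ← withDensity_apply _ hQm', mul_left_comm]
        exact mul_le_mul_right ((ENNReal.mul_le_iff_le_inv (by simp) (by simp)).1 (hj Q hQ).1) _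
      rw [indicator_of_mem hx, indicator_of_mem hx, mul_left_comm]
      exact mul_le_mul_right hb _
    · simp [indicator_of_notMem hx]
  calc (∫⁻ x, (∑ Q ∈ s, Q.indicator (fun _ => (τ Q : ℝ≥0∞) * dAvg (E.indicator w) Q) x) ^ q
        ∂volume.withDensity σ) ^ (1 / q)
      ≤ (2 ^ j)⁻¹ * (∫⁻ x, (∑ Q ∈ s, Q.indicator (fun _ => (τ Q : ℝ≥0∞) * dAvg w Q) x) ^ q
        ∂volume.withDensity σ) ^ (1 / q) :=
        lintegral_rpow_le_const_mul (Finset.measurable_sum _ fun Q hQ =>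
          measurable_const.indicator (hQm Q (hs Q hQ))) hq hle
    _ ≤ (2 ^ j)⁻¹ *
          (linTestDual Qc τ p w σ ^ q * (2 ^ (j + 1) * volume.withDensity w E)) ^ (1 / q) := by
        gcongr
        exact lintegral_rpow_sum_le_of_packing hpq hQc hQd τ hσ hLw hE hs
          (fun Q hQ => ((pos_iff_ne_zero.2 (hE0 Q hQ)).trans_le
            (measure_mono inter_subset_right)).ne') fun Q hQ => (hj Q hQ).2.le
    _ = _ := by
        rw [ENNReal.mul_rpow_of_nonneg _ _ (by positivity),
          ENNReal.mul_rpow_of_nonneg _ _ (by positivity), ← ENNReal.rpow_mul,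
          mul_one_div_cancel hq.ne', ENNReal.rpow_one, ← inv_two_pow_mul_two_pow_succ_rpow hpq j]
        ring

lemma lintegral_rpow_sum_dAvg_indicator_le {p q : ℝ} (hpq : p.HolderConjugate q)
    (hQc : Qc.Countable) (hQd : ∀ Q ∈ Qc, IsDyadicCube n Q) (τ : Set (Rn n) → ℝ≥0)
    (hσ : Measurable σ) (hLw : LocInt w) {E : Set (Rn n)} (hE : MeasurableSet E)
    {s : Finset (Set (Rn n))} (hs : ∀ Q ∈ s, Q ∈ Qc) :
    (∫⁻ x, (∑ Q ∈ s, Q.indicator (fun _ => (τ Q : ℝ≥0∞) * dAvg (E.indicator w) Q) x) ^ q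
        ∂volume.withDensity σ) ^ (1 / q) ≤
      2 ^ (1 / q) * (1 - 2⁻¹ ^ (1 / p))⁻¹ *
        (linTestDual Qc τ p w σ * volume.withDensity w E ^ (1 / q)) := by
  classical
  have hQm : ∀ Q ∈ Qc, MeasurableSet Q := fun Q hQ => (hQd Q hQ).measurableSet
  obtain ⟨lvl, hlvl⟩ := exists_forall_two_pow_mul_le_lt E
    fun Q hQ => hLw.withDensity_ne_top (hQd Q hQ)
  set s' := s.filter fun Q => volume.withDensity w (E ∩ Q) ≠ 0
  have hmem : ∀ j, ∀ Q ∈ s'.filter (lvl · = j), Q ∈ Qc ∧ volume.withDensity w (E ∩ Q) ≠ 0 ∧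
      lvl Q = j := fun j Q hQ => by
    simp only [s', Finset.mem_filter] at hQ
    exact ⟨hs Q hQ.1.1, hQ.1.2, hQ.2⟩
  have hsplit : ∀ x, ∑ Q ∈ s, Q.indicator (fun _ => (τ Q : ℝ≥0∞) * dAvg (E.indicator w) Q) x =
      ∑ j ∈ s'.image lvl, ∑ Q ∈ s'.filter (lvl · = j),
        Q.indicator (fun _ => (τ Q : ℝ≥0∞) * dAvg (E.indicator w) Q) x := fun x => by
    rw [Finset.sum_fiberwise_of_maps_to fun Q hQ => Finset.mem_image_of_mem lvl hQ]
    refine (Finset.sum_filter_of_ne fun Q hQ hF => ?_).symm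
    contrapose! hF
    rw [dAvg_indicator hE (hQm Q (hs Q hQ)), hF]
    simp
  calc (∫⁻ x, (∑ Q ∈ s, Q.indicator (fun _ => (τ Q : ℝ≥0∞) * dAvg (E.indicator w) Q) x) ^ q
        ∂volume.withDensity σ) ^ (1 / q)
      ≤ ∑ j ∈ s'.image lvl, (∫⁻ x, (∑ Q ∈ s'.filter (lvl · = j),
          Q.indicator (fun _ => (τ Q : ℝ≥0∞) * dAvg (E.indicator w) Q) x) ^ q
          ∂volume.withDensity σ) ^ (1 / q) := by
        simp_rw [hsplit]
        exact lintegral_rpow_finset_sum_le hpq.symm.lt.le _ fun j _ =>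
          Finset.measurable_sum _ fun Q hQ => measurable_const.indicator (hQm Q (hmem j Q hQ).1)
    _ ≤ ∑ j ∈ s'.image lvl, 2 ^ (1 / q) * (2⁻¹ ^ (1 / p)) ^ j *
          (linTestDual Qc τ p w σ * volume.withDensity w E ^ (1 / q)) :=
        Finset.sum_le_sum fun j _ => lintegral_rpow_sum_dAvg_indicator_le_of_level hpq hQc hQd τ
          hσ hLw hE (fun Q hQ => (hmem j Q hQ).1) j (fun Q hQ => (hmem j Q hQ).2.1)
          fun Q hQ => (hmem j Q hQ).2.2 ▸ hlvl Q (hmem j Q hQ).1 (hmem j Q hQ).2.1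
    _ ≤ 2 ^ (1 / q) * (1 - 2⁻¹ ^ (1 / p))⁻¹ *
          (linTestDual Qc τ p w σ * volume.withDensity w E ^ (1 / q)) := by
        rw [← Finset.sum_mul, ← Finset.mul_sum]
        gcongr
        exact (ENNReal.sum_le_tsum _).trans (ENNReal.tsum_geometric _).le

lemma lintegral_rpow_linOp_indicator_le {p q : ℝ} (hpq : p.HolderConjugate q)
    (hQc : Qc.Countable) (hQd : ∀ Q ∈ Qc, IsDyadicCube n Q) (τ : Set (Rn n) → ℝ≥0)
    (hσ : Measurable σ) (hLw : LocInt w) {E : Set (Rn n)} (hE : MeasurableSet E) :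
    (∫⁻ x, linOp Qc τ (E.indicator w) x ^ q ∂volume.withDensity σ) ^ (1 / q) ≤
      2 ^ (1 / q) * (1 - 2⁻¹ ^ (1 / p))⁻¹ *
        (linTestDual Qc τ p w σ * volume.withDensity w E ^ (1 / q)) := by
  have := hQc.to_subtype
  refine lintegral_rpow_tsum_le_of_forall_finset
    (fun Q : Qc => measurable_const.indicator (hQd Q Q.2).measurableSet) hpq.symm.pos fun s => ?_
  simpa only [Finset.sum_map, Function.Embedding.coe_subtype] using
    lintegral_rpow_sum_dAvg_indicator_le hpq hQc hQd τ hσ hLw hE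
      (s := s.map (Function.Embedding.subtype _)) fun Q hQ => by
        obtain ⟨Q', _, rfl⟩ := Finset.mem_map.1 hQ
        exact Q'.2

lemma linOpNormWeak_le {p : ℝ} (hp : 1 < p) (hQc : Qc.Countable)
    (hQd : ∀ Q ∈ Qc, IsDyadicCube n Q) (τ : Set (Rn n) → ℝ≥0) (hw : Measurable w)
    (hσ : Measurable σ) (hLw : LocInt w) :
    linOpNormWeak Qc τ p w σ ≤
      2 ^ (1 / (p / (p - 1))) * (1 - 2⁻¹ ^ (1 / p))⁻¹ * linTestDual Qc τ p w σ := by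
  have hpq : p.HolderConjugate (p / (p - 1)) := .conjExponent hp
  have := hLw.sigmaFinite_withDensity
  have hQm : ∀ Q ∈ Qc, MeasurableSet Q := fun Q hQ => (hQd Q hQ).measurableSet
  refine sInf_le fun f hf => ?_
  have hT := measurable_linOp hQc hQm τ (fun x => f x * σ x)
  rw [wLpNorm_le_iff hT hpq.pos]
  refine mul_meas_rpow_le_of_forall_setLIntegral_le hT hpq fun E hE _ => ?_
  calc ∫⁻ x in E, linOp Qc τ (fun x => f x * σ x) x ∂volume.withDensity w
      = ∫⁻ x, f x * linOp Qc τ (E.indicator w) x ∂volume.withDensity σ :=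
        setLIntegral_linOp_withDensity hQc hQm τ hw hσ hf hE
    _ ≤ (∫⁻ x, f x ^ p ∂volume.withDensity σ) ^ (1 / p) *
          (∫⁻ x, linOp Qc τ (E.indicator w) x ^ (p / (p - 1)) ∂volume.withDensity σ) ^
            (1 / (p / (p - 1))) :=
        ENNReal.lintegral_mul_le_Lp_mul_Lq _ hpq hf.aemeasurable
          (measurable_linOp hQc hQm τ _).aemeasurable
    _ ≤ lpNorm p σ f * (2 ^ (1 / (p / (p - 1))) * (1 - 2⁻¹ ^ (1 / p))⁻¹ *
          (linTestDual Qc τ p w σ * volume.withDensity w E ^ (1 / (p / (p - 1))))) := by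
        rw [lpNorm_eq_withDensity hσ hf]
        gcongr
        exact lintegral_rpow_linOp_indicator_le hpq hQc hQd τ hσ hLw hE
    _ = _ := by ring

end UpperBound

/-- Proposition 2.2 (Lacey–Sawyer–Uriarte-Tuero), weak type characterization. -/
theorem statement9 (n : ℕ) (p : ℝ) (hp : 1 < p) :
    ∃ c C : ℝ≥0∞, 0 < c ∧ C ≠ ∞ ∧
      ∀ Qc : Set (Set (Rn n)), Qc.Countable → (∀ Q ∈ Qc, IsDyadicCube n Q) →
      ∀ τ : Set (Rn n) → ℝ≥0,
      ∀ w σ : Rn n → ℝ≥0∞, Measurable w → Measurable σ → LocInt w → LocInt σ →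
        c * linTestDual Qc τ p w σ ≤ linOpNormWeak Qc τ p w σ ∧
        linOpNormWeak Qc τ p w σ ≤ C * linTestDual Qc τ p w σ := by
  have hδ : (2⁻¹ : ℝ≥0∞) ^ (1 / p) < 1 :=
    ENNReal.rpow_lt_one (by norm_num) (one_div_pos.2 (zero_lt_one.trans hp))
  refine ⟨(layerConst p)⁻¹, 2 ^ (1 / (p / (p - 1))) * (1 - 2⁻¹ ^ (1 / p))⁻¹,
    ENNReal.inv_pos.2 (layerConst_ne_top hp),
    ENNReal.mul_ne_top (ENNReal.rpow_ne_top_of_ne_zero two_ne_zero ofNat_ne_top)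
      (ENNReal.inv_ne_top.2 (tsub_pos_of_lt hδ).ne'),
    fun Qc hQc hQd τ w σ hw hσ hLw hLσ =>
      ⟨le_linOpNormWeak hp hQc hQd τ hw hσ hLw hLσ, linOpNormWeak_le hp hQc hQd τ hw hσ hLw⟩⟩

end Paper
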